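/- arXiv:2112.10881 — 3 statements merged into one kernel-verified Lean document; each statement's English description precedes it below -/
import Mathlib

section
/- (Existence of a strictly non-switching index in the argmax set.) Let m ≥ 2 and let a_1,…,a_m, b_1,…,b_m be real numbers. Let c_ij ≥ 0 (for i ≠ j in {1,…,m}) satisfy the non-free-loop condition: for every finite sequence of indices i_1,…,i_N with i_1 ≠ i_2, i_1 = i_N and card{i_1,…,i_N} = N − 1, one has c_{i_1 i_2} + c_{i_2 i_3} + ⋯ + c_{i_{N−1} i_N} > 0. Assume that b_i − b_j ≥ −c_ij for all i ≠ j, and let Ĩ = { j : a_j − b_j = max_{1≤l≤m} (a_l − b_l) }. Then there exists k ∈ Ĩ such that a_k > a_j − c_kj for every j ≠ k. -/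
open Filter Matrix

noncomputable section

abbrev Vec (n : ℕ) := Fin n → ℝ

/-- Euclidean norm on `Fin n → ℝ`. -/
def eucNorm {n : ℕ} (v : Vec n) : ℝ := Real.sqrt (∑ i, v i ^ 2)

/-- Euclidean inner product. -/
def dotp {n : ℕ} (u v : Vec n) : ℝ := ∑ i, u i * v i

/-- Quadratic form `⟨X v, v⟩`. -/
def quadForm {n : ℕ} (X : Matrix (Fin n) (Fin n) ℝ) (v : Vec n) : ℝ :=
  ∑ i, ∑ j, X i j * v i * v j

/-- Squared Frobenius norm. -/
def frobSq {n p : ℕ} (A : Matrix (Fin n) (Fin p) ℝ) : ℝ := ∑ i, ∑ j, A i j ^ 2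

/-- `(q, X)` belongs to the second-order subjet `J^{2,-} φ (x)`. -/
def InSubjet {n : ℕ} (φ : Vec n → ℝ) (x q : Vec n) (X : Matrix (Fin n) (Fin n) ℝ) : Prop :=
  X.IsSymm ∧ ∀ ε > (0:ℝ), ∀ᶠ y in nhds x,
    φ x + dotp q (y - x) + (1/2) * quadForm X (y - x) - ε * eucNorm (y - x) ^ 2 ≤ φ y

/-- `(q, X)` belongs to the second-order superjet `J^{2,+} φ (x)`. -/
def InSuperjet {n : ℕ} (φ : Vec n → ℝ) (x q : Vec n) (X : Matrix (Fin n) (Fin n) ℝ) : Prop :=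
  X.IsSymm ∧ ∀ ε > (0:ℝ), ∀ᶠ y in nhds x,
    φ y ≤ φ x + dotp q (y - x) + (1/2) * quadForm X (y - x) + ε * eucNorm (y - x) ^ 2

/-- Polynomial growth. -/
def PolyGrowth {n : ℕ} (φ : Vec n → ℝ) : Prop :=
  ∃ (C : ℝ) (γ : ℕ), ∀ x, |φ x| ≤ C * (1 + eucNorm x ^ γ)

/-- The switching obstacle `max_{j ≠ i} (v^j(x) - g_{ij}(x))`. -/
def obstacle {k m : ℕ} (g : Fin m → Fin m → Vec k → ℝ) (v : Fin m → Vec k → ℝ)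
    (i : Fin m) (x : Vec k) : ℝ :=
  ⨆ j : {j : Fin m // j ≠ i}, (v j x - g i j x)

/-- The second order term of the system, evaluated on a jet `(q, X)`. -/
def ham {k d m : ℕ} (r : ℝ) (b : Vec k → Vec k) (σ : Vec k → Matrix (Fin k) (Fin d) ℝ)
    (f : Fin m → Vec k → (Fin m → ℝ) → Vec d → ℝ) (v : Fin m → Vec k → ℝ)
    (i : Fin m) (x q : Vec k) (X : Matrix (Fin k) (Fin k) ℝ) : ℝ :=
  r * v i x - dotp (b x) q - (1/2) * Matrix.trace (σ x * (σ x)ᵀ * X)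
    - f i x (fun j => v j x) ((σ x)ᵀ.mulVec q)

def IsSupersolution {k d m : ℕ} (r : ℝ) (b : Vec k → Vec k)
    (σ : Vec k → Matrix (Fin k) (Fin d) ℝ)
    (f : Fin m → Vec k → (Fin m → ℝ) → Vec d → ℝ)
    (g : Fin m → Fin m → Vec k → ℝ) (v : Fin m → Vec k → ℝ) : Prop :=
  ∀ (i : Fin m) (x q : Vec k) (X : Matrix (Fin k) (Fin k) ℝ), InSubjet (v i) x q X →
    0 ≤ min (v i x - obstacle g v i x) (ham r b σ f v i x q X)

def IsSubsolution {k d m : ℕ} (r : ℝ) (b : Vec k → Vec k)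
    (σ : Vec k → Matrix (Fin k) (Fin d) ℝ)
    (f : Fin m → Vec k → (Fin m → ℝ) → Vec d → ℝ)
    (g : Fin m → Fin m → Vec k → ℝ) (v : Fin m → Vec k → ℝ) : Prop :=
  ∀ (i : Fin m) (x q : Vec k) (X : Matrix (Fin k) (Fin k) ℝ), InSuperjet (v i) x q X →
    min (v i x - obstacle g v i x) (ham r b σ f v i x q X) ≤ 0

/-- Gradient with respect to the standard basis. -/
def grad {k : ℕ} (φ : Vec k → ℝ) (x : Vec k) : Vec k :=
  fun i => fderiv ℝ φ x (Pi.single i 1)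

/-- Hessian matrix with respect to the standard basis. -/
def hess {k : ℕ} (φ : Vec k → ℝ) (x : Vec k) : Matrix (Fin k) (Fin k) ℝ :=
  fun i j => fderiv ℝ (fun y => fderiv ℝ φ y (Pi.single j 1)) x (Pi.single i 1)

/-- The infinitesimal generator `𝓛φ = ½ Tr[σσᵀ D²φ] + b · Dφ`. -/
def genL {k d : ℕ} (b : Vec k → Vec k) (σ : Vec k → Matrix (Fin k) (Fin d) ℝ)
    (φ : Vec k → ℝ) (x : Vec k) : ℝ :=
  (1/2) * Matrix.trace (σ x * (σ x)ᵀ * hess φ x) + dotp (b x) (grad φ x)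

/-- The structural assumptions on the data `b, σ, f, g` that do not involve second
derivatives of the switching costs: Lipschitz continuity and linear growth of the
coefficients, continuity, uniform Lipschitz continuity in `(y,z)` with constant `C`,
polynomial growth and monotonicity of the generators, and nonnegativity, continuity
and polynomial growth of the switching costs. -/
def CoreAssumptions {k d m : ℕ} (b : Vec k → Vec k)
    (σ : Vec k → Matrix (Fin k) (Fin d) ℝ)
    (f : Fin m → Vec k → (Fin m → ℝ) → Vec d → ℝ)
    (g : Fin m → Fin m → Vec k → ℝ) (C : ℝ) : Prop :=
  (∃ Cb : ℝ, ∀ x y : Vec k, eucNorm (b x - b y) ≤ Cb * eucNorm (x - y) ∧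
      Real.sqrt (frobSq (σ x - σ y)) ≤ Cb * eucNorm (x - y)) ∧
  (∃ Cb : ℝ, ∀ x : Vec k, eucNorm (b x) ≤ Cb * (1 + eucNorm x) ∧
      Real.sqrt (frobSq (σ x)) ≤ Cb * (1 + eucNorm x)) ∧
  (∀ i, Continuous fun p : Vec k × (Fin m → ℝ) × Vec d => f i p.1 p.2.1 p.2.2) ∧
  (∀ i (x : Vec k) (y y' : Fin m → ℝ) (z z' : Vec d),
      |f i x y z - f i x y' z'| ≤ C * (eucNorm (y - y') + eucNorm (z - z'))) ∧
  (∀ i, PolyGrowth fun x => f i x 0 0) ∧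
  (∀ i j, j ≠ i → ∀ (x : Vec k) (z : Vec d) (y : Fin m → ℝ) (t t' : ℝ), t ≤ t' →
      f i x (Function.update y j t) z ≤ f i x (Function.update y j t') z) ∧
  (∀ i j x, 0 ≤ g i j x) ∧
  (∀ i x, g i i x = 0) ∧
  (∀ i j, Continuous (g i j)) ∧
  (∀ i j, PolyGrowth (g i j))

/-- The non-free-loop condition on the switching costs. -/
def NonFreeLoop {k m : ℕ} (g : Fin m → Fin m → Vec k → ℝ) : Prop :=
  ∀ (N : ℕ) (ι : ℕ → Fin m), 2 ≤ N → ι 0 ≠ ι 1 → ι 0 = ι (N - 1) →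
    (Finset.image ι (Finset.range N)).card = N - 1 →
    ∀ x : Vec k, 0 < ∑ l ∈ Finset.range (N - 1), g (ι l) (ι (l + 1)) x

/-- The full standing assumptions: the core assumptions, smoothness of the switching
costs with `𝓛 g_{ij} ≤ 0`, and the non-free-loop condition. -/
def DataAssumptions {k d m : ℕ} (b : Vec k → Vec k)
    (σ : Vec k → Matrix (Fin k) (Fin d) ℝ)
    (f : Fin m → Vec k → (Fin m → ℝ) → Vec d → ℝ)
    (g : Fin m → Fin m → Vec k → ℝ) (C : ℝ) : Prop :=
  CoreAssumptions b σ f g C ∧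
  (∀ i j, ContDiff ℝ 2 (g i j)) ∧
  (∀ i j x, genL b σ (g i j) x ≤ 0) ∧
  NonFreeLoop g

/-- **Existence of a strictly non-switching index in the argmax set.**
Given reals `a i`, `b i` and nonnegative switching costs `c i j` satisfying the
non-free-loop condition, if `b i - b j ≥ - c i j` for all `i ≠ j`, then the argmax set
`Ĩ = {j : a j - b j = max_l (a l - b l)}` contains an index `κ` with
`a κ > a j - c κ j` for every `j ≠ κ`. -/
theorem statement5 {m : ℕ} (hm : 2 ≤ m) (a b : Fin m → ℝ) (c : Fin m → Fin m → ℝ)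
    (hc0 : ∀ i j, i ≠ j → 0 ≤ c i j)
    (hnfl : ∀ (N : ℕ) (ι : ℕ → Fin m), 2 ≤ N → ι 0 ≠ ι 1 → ι 0 = ι (N - 1) →
      (Finset.image ι (Finset.range N)).card = N - 1 →
      0 < ∑ l ∈ Finset.range (N - 1), c (ι l) (ι (l + 1)))
    (hbc : ∀ i j, i ≠ j → -(c i j) ≤ b i - b j) :
    ∃ κ : Fin m, (∀ l, a l - b l ≤ a κ - b κ) ∧ ∀ j, j ≠ κ → a j - c κ j < a κ := by
  classical
  by_contra hcon
  push_neg at hcon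
  -- `Mx k` : k is in the argmax set
  have key : ∀ k : Fin m, (∀ l, a l - b l ≤ a k - b k) →
      ∃ j, j ≠ k ∧ a k + c k j ≤ a j ∧ (∀ l, a l - b l ≤ a j - b j) := by
    intro k hk
    obtain ⟨j, hjk, hj⟩ := hcon k hk
    refine ⟨j, hjk, by linarith, ?_⟩
    intro l
    have h1 := hbc k j hjk.symm
    have h2 := hk l
    linarith
  have hκ₀ : ∃ κ : Fin m, ∀ l, a l - b l ≤ a κ - b κ := by
    obtain ⟨κ, -, hκ⟩ := Finset.exists_max_image (Finset.univ : Finset (Fin m))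
      (fun l => a l - b l) ⟨⟨0, by omega⟩, Finset.mem_univ _⟩
    exact ⟨κ, fun l => hκ l (Finset.mem_univ l)⟩
  obtain ⟨κ₀, hκ₀⟩ := hκ₀
  let F : Fin m → Fin m := fun k =>
    if hk : (∀ l, a l - b l ≤ a k - b k) then (key k hk).choose else k
  let ι : ℕ → Fin m := fun l => F^[l] κ₀
  have hMax : ∀ l, ∀ l', a l' - b l' ≤ a (ι l) - b (ι l) := by
    intro l
    induction l with
    | zero => exact hκ₀
    | succ n ih =>
      have hFe : ι (n + 1) = F (ι n) := Function.iterate_succ_apply' F n κ₀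
      rw [hFe]
      simp only [F, dif_pos ih]
      exact (key (ι n) ih).choose_spec.2.2
  have hstep : ∀ l, ι (l + 1) ≠ ι l ∧ a (ι l) + c (ι l) (ι (l + 1)) ≤ a (ι (l + 1)) := by
    intro l
    have hFe : ι (l + 1) = F (ι l) := Function.iterate_succ_apply' F l κ₀
    have hmx := hMax l
    have hch : F (ι l) = (key (ι l) hmx).choose := dif_pos hmx
    rw [hFe, hch]
    obtain ⟨h1, h2, -⟩ := (key (ι l) hmx).choose_spec
    exact ⟨h1, h2⟩
  -- pigeonhole: the sequence repeats
  obtain ⟨x, y, hxy, hfeq⟩ := Finite.exists_ne_map_eq_of_infinite ι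
  have hpq : ∃ q, ∃ p, p < q ∧ ι p = ι q := by
    rcases Nat.lt_or_ge x y with h | h
    · exact ⟨y, x, h, hfeq⟩
    · exact ⟨x, y, lt_of_le_of_ne h hxy.symm, hfeq.symm⟩
  let q := Nat.find hpq
  obtain ⟨p, hplt, hιpq⟩ : ∃ p, p < q ∧ ι p = ι q := Nat.find_spec hpq
  have hinj : ∀ i j, i < q → j < q → ι i = ι j → i = j := by
    intro i j hi hj hij
    by_contra hne
    rcases Nat.lt_or_ge i j with h | h
    · exact Nat.find_min hpq hj ⟨i, h, hij⟩
    · exact Nat.find_min hpq hi ⟨j, lt_of_le_of_ne h (Ne.symm hne), hij.symm⟩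
  -- build the loop
  set N := q - p + 1 with hNdef
  have hN2 : 2 ≤ N := by omega
  set ι' : ℕ → Fin m := fun l => ι (p + l) with hι'def
  have h01 : ι' 0 ≠ ι' 1 := by
    have h := (hstep p).1
    simpa [ι'] using h.symm
  have hlast : ι' 0 = ι' (N - 1) := by
    have h1 : p + (N - 1) = q := by omega
    simp only [ι', h1, Nat.add_zero]
    exact hιpq
  have hcard : (Finset.image ι' (Finset.range N)).card = N - 1 := by
    have himg : Finset.image ι' (Finset.range N) = Finset.image ι' (Finset.range (N - 1)) := by
      rw [show N = (N - 1) + 1 by omega, Finset.range_add_one, Finset.image_insert]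
      refine Finset.insert_eq_self.2 ?_
      refine Finset.mem_image.2 ⟨0, Finset.mem_range.2 (by omega), ?_⟩
      exact hlast
    rw [himg]
    rw [Finset.card_image_of_injOn, Finset.card_range]
    intro i hi j hj hij
    simp only [Finset.coe_range, Set.mem_Iio] at hi hj
    have := hinj (p + i) (p + j) (by omega) (by omega) hij
    omega
  have hpos := hnfl N ι' hN2 h01 hlast hcard
  -- telescoping sum
  have htel : ∑ l ∈ Finset.range (N - 1), (a (ι' (l + 1)) - a (ι' l))
      = a (ι' (N - 1)) - a (ι' 0) := Finset.sum_range_sub (fun l => a (ι' l)) (N - 1)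
  have hle : ∑ l ∈ Finset.range (N - 1), c (ι' l) (ι' (l + 1))
      ≤ ∑ l ∈ Finset.range (N - 1), (a (ι' (l + 1)) - a (ι' l)) := by
    refine Finset.sum_le_sum ?_
    intro l _
    have h := (hstep (p + l)).2
    have he : ι' (l + 1) = ι (p + l + 1) := by simp only [ι']; ring_nf
    rw [he]
    simp only [ι']
    linarith
  rw [htel, ← hlast] at hle
  simp only [sub_self] at hle
  linarith
end
end

section
/- (Pointwise obstacle inequality for supersolutions.) Let (v^1,…,v^m) be an m-tuple of lower semicontinuous functions on ℝ^k which is a viscosity supersolution of the system (S). Then for every i ∈ 𝓘 and every x ∈ ℝ^k one has v^i(x) ≥ max_{j≠i} ( v^j(x) − g_ij(x) ). -/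
open Filter Matrix

noncomputable section

/-- A lower semicontinuous real-valued function attains its minimum on a nonempty
compact set. -/
lemma lsc_exists_min {X : Type*} [TopologicalSpace X] [T2Space X] {s : Set X}
    (hs : IsCompact s) (hne : s.Nonempty) {f : X → ℝ} (hf : LowerSemicontinuous f) :
    ∃ z ∈ s, ∀ y ∈ s, f z ≤ f y := by
  classical
  have hscl : IsClosed s := hs.isClosed
  set K : s → Set X := fun y => s ∩ f ⁻¹' Set.Iic (f y) with hK
  have hKcl : ∀ y : s, IsClosed (K y) := fun y => hscl.inter (hf.isClosed_preimage _)
  have hKc : ∀ y : s, IsCompact (K y) :=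
    fun y => hs.of_isClosed_subset (hKcl y) Set.inter_subset_left
  have hKne : ∀ y : s, (K y).Nonempty := fun y => ⟨y, y.2, by simp⟩
  have hdir : Directed (· ⊇ ·) K := by
    intro y y'
    rcases le_total (f y) (f y') with h | h
    · exact ⟨y, subset_rfl, fun z hz => ⟨hz.1, le_trans hz.2 h⟩⟩
    · exact ⟨y', fun z hz => ⟨hz.1, le_trans hz.2 h⟩, subset_rfl⟩
  haveI : Nonempty s := hne.to_subtype
  obtain ⟨z, hz⟩ :=
    IsCompact.nonempty_iInter_of_directed_nonempty_isCompact_isClosed K hdir hKne hKc hKcl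
  simp only [Set.mem_iInter] at hz
  refine ⟨z, (hz ⟨hne.some, hne.some_mem⟩).1, fun y hy => (hz ⟨y, hy⟩).2⟩

/-- **Pointwise obstacle inequality for supersolutions.** If
`(v^1,…,v^m)` is an l.s.c. viscosity supersolution of the system `(S)`, then at every
point `v^i(x) ≥ max_{j ≠ i} (v^j(x) - g_{ij}(x))`. -/
theorem statement6 {k d m : ℕ} (hk : 1 ≤ k) (hd : 1 ≤ d) (hm : 2 ≤ m)
    (r : ℝ) (hr : 0 < r)
    (b : Vec k → Vec k) (σ : Vec k → Matrix (Fin k) (Fin d) ℝ)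
    (f : Fin m → Vec k → (Fin m → ℝ) → Vec d → ℝ)
    (g : Fin m → Fin m → Vec k → ℝ) (C : ℝ) (hC : 0 ≤ C)
    (hcore : CoreAssumptions b σ f g C)
    (v : Fin m → Vec k → ℝ)
    (hlsc : ∀ i, LowerSemicontinuous (v i))
    (hsuper : IsSupersolution r b σ f g v) :
    ∀ (i : Fin m) (x : Vec k) (j : Fin m), j ≠ i → v j x - g i j x ≤ v i x := by
  classical
  intro i x j hji
  set E : Vec k → ℝ := fun w => ∑ l, w l ^ 2 with hEdef
  have hEnn : ∀ w, 0 ≤ E w := fun w => Finset.sum_nonneg fun l _ => sq_nonneg _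
  have hEcont : Continuous fun y : Vec k => E (y - x) := by
    apply continuous_finset_sum
    intro l _
    exact ((continuous_apply l).sub continuous_const).pow 2
  have hE0 : E (x - x) = 0 := by simp [hEdef]
  have hEsq : ∀ w : Vec k, eucNorm w ^ 2 = E w := by
    intro w; exact Real.sq_sqrt (hEnn w)
  have hcoord : ∀ (w : Vec k) (l : Fin k), |w l| ≤ Real.sqrt (E w) := by
    intro w l
    rw [← Real.sqrt_sq_eq_abs]
    exact Real.sqrt_le_sqrt (Finset.single_le_sum (fun l _ => sq_nonneg (w l))
      (Finset.mem_univ l))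
  have hgcont : ∀ i' j', Continuous (g i' j') := hcore.2.2.2.2.2.2.2.2.1
  -- reduce to an ε-inequality
  refine le_of_forall_pos_le_add ?_
  intro ε hε
  -- neighborhood where v j is not much below v j x and g i j is not much above g i j x
  have hvj : ∀ᶠ y in nhds x, v j x - ε / 2 < v j y :=
    hlsc j x (v j x - ε / 2) (by linarith)
  have hgj : ∀ᶠ y in nhds x, g i j y < g i j x + ε / 2 := by
    have := (hgcont i j).continuousAt (x := x)
    exact this.eventually_lt_const (by linarith)
  obtain ⟨δ, hδpos, hδ⟩ := Metric.eventually_nhds_iff.mp (hvj.and hgj)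
  set δ0 : ℝ := min δ 1 with hδ0def
  have hδ0pos : 0 < δ0 := lt_min hδpos one_pos
  have hδ0le1 : δ0 ≤ 1 := min_le_right _ _
  have hδ0leδ : δ0 ≤ δ := min_le_left _ _
  -- minimum of v i on the closed unit ball
  have hball : IsCompact (Metric.closedBall x 1) := isCompact_closedBall x 1
  have hballne : (Metric.closedBall x 1).Nonempty := ⟨x, Metric.mem_closedBall_self zero_le_one⟩
  obtain ⟨z₀, hz₀mem, hz₀⟩ := lsc_exists_min hball hballne (hlsc i)
  set M : ℝ := v i z₀ with hMdef
  have hMx : M ≤ v i x := hz₀ x (Metric.mem_closedBall_self zero_le_one)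
  -- choose n large
  obtain ⟨n, hn⟩ := exists_nat_gt ((v i x - M) / δ0 ^ 2)
  have hnpos : (0 : ℝ) < n := lt_of_le_of_lt (div_nonneg (by linarith) (sq_nonneg _)) hn
  have hnδ : v i x - M < (n : ℝ) * δ0 ^ 2 := by
    rw [div_lt_iff₀ (by positivity)] at hn
    linarith [hn]
  -- minimize the penalized function
  have hFlsc : LowerSemicontinuous fun y => v i y + (n : ℝ) * E (y - x) :=
    (hlsc i).add ((continuous_const.mul hEcont).lowerSemicontinuous)
  obtain ⟨xn, hxnmem, hxnmin⟩ := lsc_exists_min hball hballne hFlsc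
  have hFx : v i xn + (n : ℝ) * E (xn - x) ≤ v i x := by
    have h := hxnmin x (Metric.mem_closedBall_self zero_le_one)
    rw [hE0, mul_zero, add_zero] at h
    exact h
  have hEn : 0 ≤ (n : ℝ) * E (xn - x) := mul_nonneg hnpos.le (hEnn _)
  have hvxn : v i xn ≤ v i x := by linarith
  have hMxn : M ≤ v i xn := hz₀ xn hxnmem
  have hEsmall : E (xn - x) < δ0 ^ 2 := by
    have h1 : (n : ℝ) * E (xn - x) ≤ v i x - M := by linarith
    have h2 : (n : ℝ) * E (xn - x) < (n : ℝ) * δ0 ^ 2 := lt_of_le_of_lt h1 hnδ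
    exact lt_of_mul_lt_mul_left h2 hnpos.le
  have hdistxn : dist xn x < δ0 := by
    rw [dist_pi_lt_iff hδ0pos]
    intro l
    calc dist (xn l) (x l) = |(xn - x) l| := by simp [Real.dist_eq]
      _ ≤ Real.sqrt (E (xn - x)) := hcoord _ l
      _ < δ0 := (Real.sqrt_lt' hδ0pos).mpr hEsmall
  -- the subjet element at xn
  set q : Vec k := fun l => -2 * (n : ℝ) * (xn l - x l) with hqdef
  set Xm : Matrix (Fin k) (Fin k) ℝ := Matrix.diagonal fun _ => (-2 * (n : ℝ)) with hXdef
  have hquad : ∀ w : Vec k, quadForm Xm w = -2 * (n : ℝ) * E w := by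
    intro w
    simp only [quadForm, hXdef, Matrix.diagonal_apply, ite_mul, zero_mul,
      Finset.sum_ite_eq, Finset.mem_univ, if_true, hEdef, Finset.mul_sum]
    exact Finset.sum_congr rfl fun l _ => by ring
  have hkey : ∀ y : Vec k,
      dotp q (y - xn) + (1/2) * quadForm Xm (y - xn)
        = (n : ℝ) * E (xn - x) - (n : ℝ) * E (y - x) := by
    intro y
    rw [hquad]
    simp only [dotp, hEdef, Pi.sub_apply, Finset.mul_sum, hqdef]
    rw [← Finset.sum_sub_distrib, ← Finset.sum_add_distrib]
    refine Finset.sum_congr rfl fun l _ => by ring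
  have hsub : InSubjet (v i) xn q Xm := by
    constructor
    · exact Matrix.isSymm_diagonal _
    · intro ε' hε'
      rw [Metric.eventually_nhds_iff]
      refine ⟨1 - dist xn x, by linarith, ?_⟩
      intro y hy
      have hymem : y ∈ Metric.closedBall x 1 := by
        rw [Metric.mem_closedBall]
        calc dist y x ≤ dist y xn + dist xn x := dist_triangle _ _ _
          _ ≤ 1 := by linarith
      have hmin := hxnmin y hymem
      have hεterm : 0 ≤ ε' * eucNorm (y - xn) ^ 2 := by
        rw [hEsq]; exact mul_nonneg hε'.le (hEnn _)
      have := hkey y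
      linarith
  -- apply the supersolution property
  have h0 := hsuper i xn q Xm hsub
  have hobs : obstacle g v i xn ≤ v i xn := by
    have := (le_min_iff.mp h0).1
    linarith
  have hterm : v j xn - g i j xn ≤ obstacle g v i xn := by
    have h := le_ciSup (f := fun j' : {j' : Fin m // j' ≠ i} => v j' xn - g i (j' : Fin m) xn)
      (Set.Finite.bddAbove (Set.finite_range _)) ⟨j, hji⟩
    simpa [obstacle] using h
  -- conclude
  have hdxn : dist xn x < δ := lt_of_lt_of_le hdistxn hδ0leδ
  obtain ⟨hv1, hv2⟩ := hδ hdxn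
  linarith
end
end

section
/- (Doubling of variables.) Let R > 0, let B̄ be the closed ball of radius R centered at 0 in ℝ^k, let u : B̄ → ℝ be upper semicontinuous and w : B̄ → ℝ be lower semicontinuous, and suppose the maximum of u − w over B̄ is attained at some point x̄ in the open ball. For each ε > 0 let (x_ε, y_ε) ∈ B̄ × B̄ be a maximizer over B̄ × B̄ of Φ_ε(x,y) = u(x) − w(y) − |x − y|²/(2ε). Then |x_ε − y_ε|²/ε stays bounded as ε → 0 and x_ε − y_ε → 0; moreover, along any sequence ε_n → 0 such that (x_{ε_n}, y_{ε_n}) converges, the common limit point x̂ of x_{ε_n} and y_{ε_n} is a maximizer of u − w over B̄, and one has |x_{ε_n} − y_{ε_n}|²/(2ε_n) → 0, u(x_{ε_n}) → u(x̂) and w(y_{ε_n}) → w(x̂). -/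
open Filter Matrix

noncomputable section

/-!
Testing `Φ_ε` at `(x̄, x̄)` gives `u x̄ - w x̄ + |x_ε - y_ε|²/(2ε) ≤ u x_ε - w y_ε`, and the right
side is bounded on the compact ball by semicontinuity; hence `|x_ε - y_ε|² = O(ε)`. Along a
convergent sequence, upper semicontinuity of `u - w` at the common limit `x̂` squeezes the same
inequality: `max (u - w) ≤ u x̂ - w x̂`, and the penalty term, `u x_ε - u x̂` and `w y_ε - w x̂`
are all forced to `0`.
-/

open Filter Topology

lemma norm_le_eucNorm {n : ℕ} (v : Vec n) : ‖v‖ ≤ eucNorm v :=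
  (pi_norm_le_iff_of_nonneg (Real.sqrt_nonneg _)).2 fun i => by
    rw [Real.norm_eq_abs]
    exact Real.abs_le_sqrt (Finset.single_le_sum (fun j _ => sq_nonneg (v j)) (Finset.mem_univ i))

lemma continuous_eucNorm {n : ℕ} : Continuous (eucNorm (n := n)) :=
  Real.continuous_sqrt.comp (by fun_prop)

lemma isCompact_setOf_eucNorm_le {n : ℕ} (R : ℝ) : IsCompact {x : Vec n | eucNorm x ≤ R} :=
  Metric.isCompact_of_isClosed_isBounded (isClosed_le continuous_eucNorm continuous_const)
    ((Metric.isBounded_closedBall (x := 0) (r := R)).subset fun x hx => by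
      simpa using (norm_le_eucNorm x).trans hx)

lemma tendsto_zero_of_eucNorm_sq_le {n : ℕ} {ι : Type*} {l : Filter ι} {f : ι → Vec n}
    {g : ι → ℝ} (hg : Tendsto g l (𝓝 0)) (h : ∀ᶠ i in l, eucNorm (f i) ^ 2 ≤ g i) :
    Tendsto f l (𝓝 0) := by
  refine squeeze_zero_norm' ?_ (by simpa using hg.sqrt)
  filter_upwards [h] with i hi
  exact (norm_le_eucNorm _).trans (Real.le_sqrt_of_sq_le hi)

section Semicontinuous

variable {X ι : Type*} [TopologicalSpace X] {K : Set X} {u w : X → ℝ}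

lemma exists_forall_sub_le_of_isCompact (hK : IsCompact K) (hu : UpperSemicontinuousOn u K)
    (hw : LowerSemicontinuousOn w K) : ∃ C, ∀ a ∈ K, ∀ b ∈ K, u a - w b ≤ C := by
  obtain ⟨Mu, hMu⟩ := hu.bddAbove_of_isCompact hK
  obtain ⟨mw, hmw⟩ := hw.bddBelow_of_isCompact hK
  exact ⟨Mu - mw, fun a ha b hb =>
    sub_le_sub (hMu (Set.mem_image_of_mem u ha)) (hmw (Set.mem_image_of_mem w hb))⟩

variable {p : X} {l : Filter ι} {x y : ι → X}

lemma eventually_lt_and_lt_of_tendsto (hu : UpperSemicontinuousWithinAt u K p)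
    (hw : LowerSemicontinuousWithinAt w K p) (hx : Tendsto x l (𝓝[K] p))
    (hy : Tendsto y l (𝓝[K] p)) {η : ℝ} (hη : 0 < η) :
    ∀ᶠ i in l, u (x i) < u p + η ∧ w p - η < w (y i) :=
  (hx.eventually (hu _ (lt_add_of_pos_right _ hη))).and (hy.eventually (hw _ (sub_lt_self _ hη)))

lemma le_sub_of_tendsto [l.NeBot] (hu : UpperSemicontinuousWithinAt u K p)
    (hw : LowerSemicontinuousWithinAt w K p) (hx : Tendsto x l (𝓝[K] p))
    (hy : Tendsto y l (𝓝[K] p)) {A : ℝ} (hle : ∀ᶠ i in l, A ≤ u (x i) - w (y i)) :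
    A ≤ u p - w p := by
  refine le_of_forall_pos_le_add fun η hη => ?_
  obtain ⟨i, ⟨hui, hwi⟩, hlei⟩ :=
    ((eventually_lt_and_lt_of_tendsto hu hw hx hy (half_pos hη)).and hle).exists
  linarith

lemma tendsto_of_add_le_sub_of_sub_le (hu : UpperSemicontinuousWithinAt u K p)
    (hw : LowerSemicontinuousWithinAt w K p) (hx : Tendsto x l (𝓝[K] p))
    (hy : Tendsto y l (𝓝[K] p)) {A : ℝ} {d : ι → ℝ} (hd : ∀ᶠ i in l, 0 ≤ d i)
    (hle : ∀ᶠ i in l, A + d i ≤ u (x i) - w (y i)) (hA : u p - w p ≤ A) :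
    Tendsto d l (𝓝 0) ∧ Tendsto (fun i => u (x i)) l (𝓝 (u p)) ∧
      Tendsto (fun i => w (y i)) l (𝓝 (w p)) := by
  refine ⟨Metric.tendsto_nhds.2 fun η hη => ?_, Metric.tendsto_nhds.2 fun η hη => ?_,
    Metric.tendsto_nhds.2 fun η hη => ?_⟩ <;>
  · filter_upwards [eventually_lt_and_lt_of_tendsto hu hw hx hy (half_pos hη), hd, hle]
      with i ⟨hui, hwi⟩ hdi hlei
    rw [Real.dist_eq, abs_lt]
    constructor <;> linarith

end Semicontinuous

theorem statement7_general {k : ℕ} (R : ℝ)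
    (u w : Vec k → ℝ)
    (husc : UpperSemicontinuousOn u {x : Vec k | eucNorm x ≤ R})
    (hlsc : LowerSemicontinuousOn w {x : Vec k | eucNorm x ≤ R})
    (xbar : Vec k) (hxbar : eucNorm xbar < R)
    (hmax : ∀ x : Vec k, eucNorm x ≤ R → u x - w x ≤ u xbar - w xbar)
    (xe ye : ℝ → Vec k)
    (hball : ∀ ε : ℝ, 0 < ε → eucNorm (xe ε) ≤ R ∧ eucNorm (ye ε) ≤ R)
    (hopt : ∀ ε : ℝ, 0 < ε → ∀ x y : Vec k, eucNorm x ≤ R → eucNorm y ≤ R →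
      u x - w y - eucNorm (x - y) ^ 2 / (2 * ε)
        ≤ u (xe ε) - w (ye ε) - eucNorm (xe ε - ye ε) ^ 2 / (2 * ε)) :
    (∃ M : ℝ, ∀ᶠ ε in nhdsWithin (0:ℝ) (Set.Ioi 0),
        eucNorm (xe ε - ye ε) ^ 2 / ε ≤ M) ∧
    Tendsto (fun ε => xe ε - ye ε) (nhdsWithin (0:ℝ) (Set.Ioi 0)) (nhds 0) ∧
    ∀ (εn : ℕ → ℝ) (p p' : Vec k), (∀ n, 0 < εn n) → Tendsto εn atTop (nhds 0) →
      Tendsto (fun n => xe (εn n)) atTop (nhds p) →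
      Tendsto (fun n => ye (εn n)) atTop (nhds p') →
      p = p' ∧ eucNorm p ≤ R ∧ (∀ x : Vec k, eucNorm x ≤ R → u x - w x ≤ u p - w p) ∧
      Tendsto (fun n => eucNorm (xe (εn n) - ye (εn n)) ^ 2 / (2 * εn n)) atTop (nhds 0) ∧
      Tendsto (fun n => u (xe (εn n))) atTop (nhds (u p)) ∧
      Tendsto (fun n => w (ye (εn n))) atTop (nhds (w p)) := by
  set K := {x : Vec k | eucNorm x ≤ R}
  set A := u xbar - w xbar
  have hpen : ∀ ε, 0 < ε → A + eucNorm (xe ε - ye ε) ^ 2 / (2 * ε) ≤ u (xe ε) - w (ye ε) :=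
    fun ε hε => by
      have h := hopt ε hε xbar xbar hxbar.le hxbar.le
      rwa [sub_self xbar, show eucNorm (0 : Vec k) = 0 by simp [eucNorm], zero_pow two_ne_zero,
        zero_div, sub_zero, le_sub_iff_add_le] at h
  obtain ⟨C, hC⟩ := exists_forall_sub_le_of_isCompact (isCompact_setOf_eucNorm_le R) husc hlsc
  have hsq : ∀ ε, 0 < ε → eucNorm (xe ε - ye ε) ^ 2 ≤ 2 * (C - A) * ε := fun ε hε => by
    have h := (hpen ε hε).trans (hC _ (hball ε hε).1 _ (hball ε hε).2)
    rw [← le_sub_iff_add_le', div_le_iff₀ (by positivity)] at h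
    linarith
  refine ⟨⟨2 * (C - A), eventually_nhdsWithin_of_forall fun ε hε => (div_le_iff₀ hε).2 (hsq ε hε)⟩,
    tendsto_zero_of_eucNorm_sq_le ?_ (eventually_nhdsWithin_of_forall hsq), ?_⟩
  · simpa using (tendsto_id.const_mul (2 * (C - A))).mono_left (nhdsWithin_le_nhds (a := (0 : ℝ)))
  intro εn p p' hpos hεn hx hy
  have hdiff : Tendsto (fun n => xe (εn n) - ye (εn n)) atTop (𝓝 0) :=
    tendsto_zero_of_eucNorm_sq_le (by simpa using hεn.const_mul (2 * (C - A)))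
      (Eventually.of_forall fun n => hsq _ (hpos n))
  obtain rfl : p = p' := sub_eq_zero.1 (tendsto_nhds_unique (hx.sub hy) hdiff)
  have hxK : Tendsto (fun n => xe (εn n)) atTop (𝓝[K] p) :=
    tendsto_nhdsWithin_iff.2 ⟨hx, .of_forall fun n => (hball _ (hpos n)).1⟩
  have hyK : Tendsto (fun n => ye (εn n)) atTop (𝓝[K] p) :=
    tendsto_nhdsWithin_iff.2 ⟨hy, .of_forall fun n => (hball _ (hpos n)).2⟩
  have hpK : p ∈ K := (isCompact_setOf_eucNorm_le R).isClosed.mem_of_tendsto hx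
    (tendsto_nhdsWithin_iff.1 hxK).2
  have hle := fun n => hpen (εn n) (hpos n)
  have hd : ∀ n, 0 ≤ eucNorm (xe (εn n) - ye (εn n)) ^ 2 / (2 * εn n) :=
    fun n => div_nonneg (sq_nonneg _) (by linarith [hpos n])
  have hA : A ≤ u p - w p := le_sub_of_tendsto (husc p hpK) (hlsc p hpK) hxK hyK
    (Eventually.of_forall fun n => (le_add_of_nonneg_right (hd n)).trans (hle n))
  obtain ⟨hpenalty, hu, hw⟩ := tendsto_of_add_le_sub_of_sub_le (husc p hpK) (hlsc p hpK) hxK hyK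
    (Eventually.of_forall hd) (Eventually.of_forall hle) (hmax p hpK)
  exact ⟨rfl, hpK, fun x hx => (hmax x hx).trans hA, hpenalty, hu, hw⟩

/-- **Doubling of variables.** Let `u` be u.s.c. and `w` l.s.c. on the
closed Euclidean ball `B̄` of radius `R`, with `u - w` maximized over `B̄` at an interior
point `x̄`, and for each `ε > 0` let `(x_ε, y_ε)` maximize
`Φ_ε(x,y) = u x - w y - |x-y|²/(2ε)` over `B̄ × B̄`.  Then `|x_ε - y_ε|²/ε` stays bounded
as `ε → 0⁺` and `x_ε - y_ε → 0`; moreover along any sequence `ε_n → 0` for which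
`(x_{ε_n}, y_{ε_n})` converges, the two limits coincide, the common limit is a maximizer
of `u - w` on `B̄`, `|x_{ε_n} - y_{ε_n}|²/(2ε_n) → 0`, `u (x_{ε_n}) → u x̂` and
`w (y_{ε_n}) → w x̂`. -/
theorem statement7 {k : ℕ} (R : ℝ) (hR : 0 < R)
    (u w : Vec k → ℝ)
    (husc : UpperSemicontinuousOn u {x : Vec k | eucNorm x ≤ R})
    (hlsc : LowerSemicontinuousOn w {x : Vec k | eucNorm x ≤ R})
    (xbar : Vec k) (hxbar : eucNorm xbar < R)
    (hmax : ∀ x : Vec k, eucNorm x ≤ R → u x - w x ≤ u xbar - w xbar)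
    (xe ye : ℝ → Vec k)
    (hball : ∀ ε : ℝ, 0 < ε → eucNorm (xe ε) ≤ R ∧ eucNorm (ye ε) ≤ R)
    (hopt : ∀ ε : ℝ, 0 < ε → ∀ x y : Vec k, eucNorm x ≤ R → eucNorm y ≤ R →
      u x - w y - eucNorm (x - y) ^ 2 / (2 * ε)
        ≤ u (xe ε) - w (ye ε) - eucNorm (xe ε - ye ε) ^ 2 / (2 * ε)) :
    (∃ M : ℝ, ∀ᶠ ε in nhdsWithin (0:ℝ) (Set.Ioi 0),
        eucNorm (xe ε - ye ε) ^ 2 / ε ≤ M) ∧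
    Tendsto (fun ε => xe ε - ye ε) (nhdsWithin (0:ℝ) (Set.Ioi 0)) (nhds 0) ∧
    ∀ (εn : ℕ → ℝ) (p p' : Vec k), (∀ n, 0 < εn n) → Tendsto εn atTop (nhds 0) →
      Tendsto (fun n => xe (εn n)) atTop (nhds p) →
      Tendsto (fun n => ye (εn n)) atTop (nhds p') →
      p = p' ∧ eucNorm p ≤ R ∧ (∀ x : Vec k, eucNorm x ≤ R → u x - w x ≤ u p - w p) ∧
      Tendsto (fun n => eucNorm (xe (εn n) - ye (εn n)) ^ 2 / (2 * εn n)) atTop (nhds 0) ∧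
      Tendsto (fun n => u (xe (εn n))) atTop (nhds (u p)) ∧
      Tendsto (fun n => w (ye (εn n))) atTop (nhds (w p)) :=
  statement7_general R u w husc hlsc xbar hxbar hmax xe ye hball hopt
end
end
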